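/- Let T be the set of vectors of norm 3 (i.e., ⟨x,x⟩ = 3) in the lattice A₁₅⁺ generated by A₁₅ = {x ∈ ℤ^{16} : ∑xᵢ = 0} and the vector [4] = (1/4)𝟙 − e₁₃ − e₁₄ − e₁₅ − e₁₆. Then T = {±t_I : I ⊆ {1,…,16}, |I| = 4}, where t_I = (1/4)𝟙 − ∑_{i∈I} eᵢ. -/

import Mathlib

open scoped RealInnerProductSpace

/-- `t_I = (1/4)·𝟙 − ∑_{i ∈ I} e_i ∈ ℝ^16`. -/
noncomputable def tVec (I : Finset (Fin 16)) : EuclideanSpace ℝ (Fin 16) :=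
  WithLp.toLp 2 (fun j => 1 / 4 - if j ∈ I then 1 else 0)

/-- The lattice `A₁₅⁺`: the ℤ-span of `A₁₅ = {x ∈ ℤ^16 : ∑ xᵢ = 0}` and the glue
vector `[4] = (1/4)𝟙 − e₁₃ − e₁₄ − e₁₅ − e₁₆ = t_{13,14,15,16}`. -/
noncomputable def A15plus : Submodule ℤ (EuclideanSpace ℝ (Fin 16)) :=
  Submodule.span ℤ
    ({x : EuclideanSpace ℝ (Fin 16) | (∀ i, ∃ k : ℤ, x i = (k : ℝ)) ∧ ∑ i, x i = 0}
      ∪ {tVec {12, 13, 14, 15}})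

/-!
Every vector of `A₁₅⁺` has all coordinates in one coset `r/4 + ℤ`, `0 ≤ r < 4`, and coordinate
sum `0`. Writing `xᵢ = dᵢ + r/4`, the conditions `∑ xᵢ = 0` and `∑ xᵢ² = 3` combine into
`∑ dᵢ (dᵢ + 1) = (r - 1)(r - 3)`. The left side is even and nonnegative, so `r = 1` or `r = 3`
and the sum vanishes, which forces every `dᵢ ∈ {0, -1}`. Hence `x = t_I` (for `r = 1`) or
`x = -t_I` (for `r = 3`), and `∑ xᵢ = 0` gives `|I| = 4`.
-/

open Finset

lemma tVec_apply (I : Finset (Fin 16)) (j : Fin 16) :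
    tVec I j = 1 / 4 - if j ∈ I then 1 else 0 := rfl

lemma sum_tVec (I : Finset (Fin 16)) : ∑ j, tVec I j = 4 - #I := by
  simp only [tVec_apply, sum_sub_distrib, sum_ite_mem, univ_inter]
  norm_num

lemma inner_tVec_self {I : Finset (Fin 16)} (hI : #I = 4) : ⟪tVec I, tVec I⟫ = 3 := by
  have hsq : ∀ j, tVec I j * tVec I j = 1 / 16 + if j ∈ I then 1 / 2 else 0 := fun j => by
    rw [tVec_apply]; split_ifs <;> norm_num
  simp only [PiLp.inner_apply, RCLike.inner_apply, conj_trivial, hsq, sum_add_distrib,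
    sum_ite_mem, univ_inter]
  norm_num [hI]

lemma tVec_mem_A15plus {I : Finset (Fin 16)} (hI : #I = 4) : tVec I ∈ A15plus := by
  set J : Finset (Fin 16) := {12, 13, 14, 15}
  have hJ : tVec J ∈ A15plus := Submodule.subset_span (Or.inr rfl)
  have hIJ : tVec I - tVec J ∈ A15plus := by
    refine Submodule.subset_span (Or.inl ⟨fun i => ⟨(if i ∈ J then 1 else 0) -
      (if i ∈ I then 1 else 0), ?_⟩, ?_⟩)
    · simp only [PiLp.sub_apply, tVec_apply]
      push_cast
      ring
    · simp only [PiLp.sub_apply, sum_sub_distrib, sum_tVec, hI, show #J = 4 from rfl]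
      norm_num
  simpa using add_mem hIJ hJ

def quarterCosetLattice (ι : Type*) [Fintype ι] : Submodule ℤ (EuclideanSpace ℝ ι) where
  carrier := {x | (∃ (k : ℤ) (c : ι → ℤ), ∀ i, x i = c i + k / 4) ∧ ∑ i, x i = 0}
  zero_mem' := ⟨⟨0, 0, fun i => by simp⟩, by simp⟩
  add_mem' := by
    rintro x y ⟨⟨k, c, hc⟩, hx⟩ ⟨⟨l, e, he⟩, hy⟩
    refine ⟨⟨k + l, c + e, fun i => ?_⟩, ?_⟩
    · simp only [PiLp.add_apply, hc, he, Pi.add_apply]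
      push_cast
      ring
    · simp [sum_add_distrib, hx, hy]
  smul_mem' := by
    rintro n x ⟨⟨k, c, hc⟩, hx⟩
    refine ⟨⟨n * k, n • c, fun i => ?_⟩, ?_⟩
    · simp only [PiLp.smul_apply, hc, Pi.smul_apply, zsmul_eq_mul]
      push_cast
      ring
    · simp [← mul_sum, hx]

lemma A15plus_le_quarterCosetLattice : A15plus ≤ quarterCosetLattice (Fin 16) := by
  rw [A15plus, Submodule.span_le]
  rintro y (⟨hy, hsum⟩ | rfl)
  · choose c hc using hy
    exact ⟨⟨0, c, fun i => by simp [hc]⟩, hsum⟩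
  · refine ⟨⟨1, fun i => -(if i ∈ ({12, 13, 14, 15} : Finset (Fin 16)) then 1 else 0),
      fun i => ?_⟩, ?_⟩
    · rw [tVec_apply]
      push_cast
      ring
    · rw [sum_tVec]
      norm_num [show #({12, 13, 14, 15} : Finset (Fin 16)) = 4 from rfl]

lemma exists_residue_of_mem_quarterCosetLattice {ι : Type*} [Fintype ι]
    {x : EuclideanSpace ℝ ι} (hx : x ∈ quarterCosetLattice ι) :
    ∃ r : ℤ, 0 ≤ r ∧ r < 4 ∧ ∃ d : ι → ℤ, ∀ i, x i = d i + r / 4 := by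
  obtain ⟨⟨k, c, hc⟩, -⟩ := hx
  refine ⟨k % 4, Int.emod_nonneg k (by norm_num), Int.emod_lt_of_pos k (by norm_num),
    fun i => c i + k / 4, fun i => ?_⟩
  have hk : (k : ℝ) = 4 * (k / 4 : ℤ) + (k % 4 : ℤ) := by
    exact_mod_cast (Int.mul_ediv_add_emod k 4).symm
  rw [hc i, hk]
  push_cast
  ring

lemma Int.mul_add_one_self_nonneg (n : ℤ) : 0 ≤ n * (n + 1) := by
  rcases le_or_gt 0 n with h | h <;> nlinarith

lemma sum_mul_add_one_eq {x : EuclideanSpace ℝ (Fin 16)} {r : ℤ} {d : Fin 16 → ℤ}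
    (hd : ∀ i, x i = d i + r / 4) (hsum : ∑ i, x i = 0) (hnorm : ⟪x, x⟫ = 3) :
    ∑ i, d i * (d i + 1) = (r - 1) * (r - 3) := by
  have hterm : ∀ i, ((d i * (d i + 1) : ℤ) : ℝ) =
      x i * x i + (1 - r / 2) * x i + r / 4 * (r / 4 - 1) := fun i => by
    push_cast
    rw [hd i]
    ring
  have hnorm' : ∑ i, x i * x i = 3 := by
    simpa only [PiLp.inner_apply, RCLike.inner_apply, conj_trivial] using hnorm
  have : ((∑ i, d i * (d i + 1) : ℤ) : ℝ) = (r - 1) * (r - 3) := by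
    rw [Int.cast_sum]
    simp only [hterm, sum_add_distrib, ← mul_sum, hsum, hnorm', sum_const, card_univ]
    norm_num
    ring
  exact_mod_cast this

lemma residue_eq_one_or_three {ι : Type*} [Fintype ι] {r : ℤ} (hr0 : 0 ≤ r) (hr4 : r < 4)
    {d : ι → ℤ} (hd : ∑ i, d i * (d i + 1) = (r - 1) * (r - 3)) : r = 1 ∨ r = 3 := by
  have hnonneg : 0 ≤ (r - 1) * (r - 3) :=
    hd ▸ sum_nonneg fun i _ => Int.mul_add_one_self_nonneg (d i)
  have heven : Even ((r - 1) * (r - 3)) :=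
    hd ▸ Finset.even_sum _ fun i _ => Int.even_mul_succ_self (d i)
  interval_cases r
  · exact absurd heven (by decide)
  · exact .inl rfl
  · norm_num at hnonneg
  · exact .inr rfl

lemma eq_tVec_of_sum_mul_add_one_eq_zero {x : EuclideanSpace ℝ (Fin 16)} {d : Fin 16 → ℤ}
    (hd : ∀ i, x i = d i + 1 / 4) (h : ∑ i, d i * (d i + 1) = 0) :
    x = tVec {i | d i = -1} := by
  have hzero := (sum_eq_zero_iff_of_nonneg fun i _ => Int.mul_add_one_self_nonneg (d i)).mp h
  ext i
  rw [hd i, tVec_apply]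
  rcases mul_eq_zero.mp (hzero i (mem_univ i)) with hi | hi
  · simp [hi]
  · have hi' : d i = -1 := by omega
    simp [hi']
    norm_num

theorem stmt_10 (x : EuclideanSpace ℝ (Fin 16)) :
    (x ∈ A15plus ∧ ⟪x, x⟫ = 3) ↔
      ∃ I : Finset (Fin 16), I.card = 4 ∧ (x = tVec I ∨ x = -tVec I) := by
  constructor
  · rintro ⟨hx, hnorm⟩
    have hxM := A15plus_le_quarterCosetLattice hx
    have hsum : ∑ i, x i = 0 := hxM.2
    obtain ⟨r, hr0, hr4, d, hd⟩ := exists_residue_of_mem_quarterCosetLattice hxM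
    have hquad := sum_mul_add_one_eq hd hsum hnorm
    have card_eq {I : Finset (Fin 16)} (h : ∑ i, tVec I i = 0) : #I = 4 := by
      rw [sum_tVec] at h
      exact_mod_cast (sub_eq_zero.mp h).symm
    rcases residue_eq_one_or_three hr0 hr4 hquad with rfl | rfl
    · have hx := eq_tVec_of_sum_mul_add_one_eq_zero (by simpa using hd) (by simpa using hquad)
      exact ⟨_, card_eq (hx ▸ hsum), .inl hx⟩
    · -- `-x` has residue `1`, with integer parts `-dᵢ - 1`
      have hquad' : ∑ i, (-d i - 1) * (-d i - 1 + 1) = 0 :=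
        (sum_congr rfl fun i _ => by ring).trans hquad
      have hx := eq_tVec_of_sum_mul_add_one_eq_zero (x := -x) (fun i => by simp [hd i]; ring)
        hquad'
      refine ⟨_, card_eq ?_, .inr (neg_eq_iff_eq_neg.mp hx)⟩
      rw [← hx]
      simp [hsum]
  · rintro ⟨I, hI, rfl | rfl⟩
    · exact ⟨tVec_mem_A15plus hI, inner_tVec_self hI⟩
    · exact ⟨neg_mem (tVec_mem_A15plus hI), (inner_neg_neg _ _).trans (inner_tVec_self hI)⟩
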